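/- arXiv:2003.06154 — 2 statements merged into one kernel-verified Lean document; each statement's English description precedes it below -/
import Mathlib

section
/- For a finite deterministic Markov decision process, stationary policies suffice: for every state x ∈ S, the minimum of v_π(x) over all stationary policies π : S → A equals the infimum of J(x, u) over all (possibly nonstationary) action sequences u : ℕ → A, and this infimum is attained. -/
/-- Trajectory of a deterministic MDP: `x(0) = x₀` and `x(t+1) = f (x t) (u t)`. -/
def traj {S A : Type*} (f : S → A → S) (x0 : S) (u : ℕ → A) : ℕ → S
  | 0 => x0
  | t + 1 => f (traj f x0 u t) (u t)

/-- Discounted cost of an action sequence from an initial state. -/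
noncomputable def Jcost {S A : Type*} (f : S → A → S) (g : S → A → ℝ) (lam : ℝ)
    (x0 : S) (u : ℕ → A) : ℝ :=
  ∑' t : ℕ, lam ^ t * g (traj f x0 u t) (u t)


/-- Closed-loop trajectory under a stationary policy. -/
def ctraj {S A : Type*} (f : S → A → S) (pol : S → A) (x : S) : ℕ → S
  | 0 => x
  | t + 1 => f (ctraj f pol x t) (pol (ctraj f pol x t))

/-- Value function of a stationary policy. -/
noncomputable def vpi {S A : Type*} (f : S → A → S) (g : S → A → ℝ) (lam : ℝ)
    (pol : S → A) (x : S) : ℝ :=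
  ∑' t : ℕ, lam ^ t * g (ctraj f pol x t) (pol (ctraj f pol x t))

/-!
The Bellman operator `v ↦ (x ↦ minₐ g x a + λ v (f x a))` is a `λ`-contraction of the sup metric
on `S → ℝ`, so it has a fixed point `V`. Along any trajectory the bounded quantity
`V x - J(x, u)` is at most `λ` times its value one step later, hence it is `≤ 0`: `V` bounds every
cost from below. For the greedy policy, which attains the minimum in the Bellman equation,
`vπ - V` is exactly `λ` times its value one step later, hence vanishes. So the open-loop cost
of the greedy policy attains both infima, which therefore equal `V x`.
-/

open Finset

section Discounted

variable {lam : ℝ}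

lemma norm_pow_mul_le (h0 : 0 ≤ lam) {c : ℕ → ℝ} {M : ℝ} (hc : ∀ t, |c t| ≤ M) (t : ℕ) :
    ‖lam ^ t * c t‖ ≤ M * lam ^ t := by
  rw [Real.norm_eq_abs, abs_mul, abs_pow, abs_of_nonneg h0, mul_comm]
  exact mul_le_mul_of_nonneg_right (hc t) (pow_nonneg h0 t)

lemma summable_pow_mul_of_abs_le (h0 : 0 ≤ lam) (h1 : lam < 1) {c : ℕ → ℝ} {M : ℝ}
    (hc : ∀ t, |c t| ≤ M) : Summable fun t => lam ^ t * c t :=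
  Summable.of_norm_bounded ((summable_geometric_of_lt_one h0 h1).mul_left M)
    (norm_pow_mul_le h0 hc)

lemma abs_tsum_pow_mul_le (h0 : 0 ≤ lam) (h1 : lam < 1) {c : ℕ → ℝ} {M : ℝ}
    (hc : ∀ t, |c t| ≤ M) : |∑' t, lam ^ t * c t| ≤ M * (1 - lam)⁻¹ :=
  tsum_of_norm_bounded ((hasSum_geometric_of_lt_one h0 h1).mul_left M) (norm_pow_mul_le h0 hc)

lemma tsum_pow_mul_eq_add {c : ℕ → ℝ} (hc : Summable fun t => lam ^ t * c t) :
    ∑' t, lam ^ t * c t = c 0 + lam * ∑' t, lam ^ t * c (t + 1) := by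
  rw [hc.tsum_eq_zero_add, ← tsum_mul_left, pow_zero, one_mul]
  congr 1
  exact tsum_congr fun t => by ring

lemma nonpos_of_forall_exists_le_mul {X : Type*} {h : X → ℝ} {B : ℝ} (h0 : 0 ≤ lam)
    (h1 : lam < 1) (hB : ∀ x, h x ≤ B) (hstep : ∀ x, ∃ x', h x ≤ lam * h x') (x : X) :
    h x ≤ 0 := by
  have : Nonempty X := ⟨x⟩
  have hbdd : BddAbove (Set.range h) := ⟨B, Set.forall_mem_range.2 hB⟩
  have hsup : ⨆ y, h y ≤ lam * ⨆ y, h y := ciSup_le fun y => by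
    obtain ⟨y', hy'⟩ := hstep y
    exact hy'.trans (mul_le_mul_of_nonneg_left (le_ciSup hbdd y') h0)
  have : ⨆ y, h y ≤ 0 := by nlinarith
  exact (le_ciSup hbdd x).trans this

end Discounted

section Trajectories

variable {S A : Type*} (f : S → A → S)

lemma traj_succ' (x : S) (u : ℕ → A) (t : ℕ) :
    traj f x u (t + 1) = traj f (f x (u 0)) (fun t => u (t + 1)) t := by
  induction t with
  | zero => rfl
  | succ t ih => exact congrArg₂ f ih rfl

lemma ctraj_succ' (pol : S → A) (x : S) (t : ℕ) :
    ctraj f pol x (t + 1) = ctraj f pol (f x (pol x)) t := by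
  induction t with
  | zero => rfl
  | succ t ih => rw [ctraj, ih, ctraj]

lemma traj_ctraj (pol : S → A) (x : S) :
    traj f x (fun t => pol (ctraj f pol x t)) = ctraj f pol x := by
  funext t
  induction t with
  | zero => rfl
  | succ t ih => rw [traj, ih, ctraj]

lemma vpi_eq_Jcost (g : S → A → ℝ) (lam : ℝ) (pol : S → A) (x : S) :
    vpi f g lam pol x = Jcost f g lam x (fun t => pol (ctraj f pol x t)) := by
  rw [Jcost, traj_ctraj, vpi]

end Trajectories

section Bellman

variable {S A : Type*} [Fintype A] [Nonempty A] (f : S → A → S) (g : S → A → ℝ) (lam : ℝ)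

noncomputable def bellman (v : S → ℝ) (x : S) : ℝ :=
  univ.inf' univ_nonempty fun a => g x a + lam * v (f x a)

lemma bellman_le (v : S → ℝ) (x : S) (a : A) : bellman f g lam v x ≤ g x a + lam * v (f x a) :=
  inf'_le _ (mem_univ a)

lemma exists_bellman_eq (v : S → ℝ) (x : S) :
    ∃ a, bellman f g lam v x = g x a + lam * v (f x a) :=
  let ⟨a, _, ha⟩ := exists_mem_eq_inf' univ_nonempty fun a => g x a + lam * v (f x a)
  ⟨a, ha⟩

variable {lam}

lemma bellman_le_bellman_add (h0 : 0 ≤ lam) {v w : S → ℝ} {d : ℝ} (h : ∀ y, v y ≤ w y + d)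
    (x : S) : bellman f g lam v x ≤ bellman f g lam w x + lam * d := by
  rw [← sub_le_iff_le_add]
  refine le_inf' _ _ fun a _ => ?_
  nlinarith [bellman_le f g lam v x a, h (f x a)]

lemma bellman_contractingWith [Fintype S] (h0 : 0 ≤ lam) (h1 : lam < 1) :
    ContractingWith ⟨lam, h0⟩ (bellman f g lam) := by
  refine ⟨h1, LipschitzWith.of_dist_le_mul fun v w => ?_⟩
  refine (dist_pi_le_iff (mul_nonneg h0 dist_nonneg)).2 fun x => ?_
  have hvw : ∀ y, |v y - w y| ≤ dist v w := fun y => by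
    simpa only [Real.dist_eq] using dist_le_pi_dist v w y
  rw [Real.dist_eq, abs_sub_le_iff, sub_le_iff_le_add', sub_le_iff_le_add']
  exact ⟨bellman_le_bellman_add f g h0 (fun y => by linarith [le_abs_self (v y - w y), hvw y]) x,
    bellman_le_bellman_add f g h0 (fun y => by linarith [neg_abs_le (v y - w y), hvw y]) x⟩

end Bellman

section BoundedCost

variable {S A : Type*} (f : S → A → S) {g : S → A → ℝ} {lam M : ℝ}

lemma abs_Jcost_le (h0 : 0 ≤ lam) (h1 : lam < 1) (hg : ∀ x a, |g x a| ≤ M)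
    (x : S) (u : ℕ → A) : |Jcost f g lam x u| ≤ M * (1 - lam)⁻¹ :=
  abs_tsum_pow_mul_le h0 h1 fun _ => hg _ _

lemma Jcost_eq_add (h0 : 0 ≤ lam) (h1 : lam < 1) (hg : ∀ x a, |g x a| ≤ M)
    (x : S) (u : ℕ → A) :
    Jcost f g lam x u = g x (u 0) + lam * Jcost f g lam (f x (u 0)) (fun t => u (t + 1)) := by
  rw [Jcost, tsum_pow_mul_eq_add (summable_pow_mul_of_abs_le h0 h1 fun _ => hg _ _), Jcost]
  simp only [traj_succ']
  rfl

lemma vpi_eq_add (h0 : 0 ≤ lam) (h1 : lam < 1) (hg : ∀ x a, |g x a| ≤ M)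
    (pol : S → A) (x : S) :
    vpi f g lam pol x = g x (pol x) + lam * vpi f g lam pol (f x (pol x)) := by
  rw [vpi_eq_Jcost, Jcost_eq_add f h0 h1 hg, vpi_eq_Jcost]
  simp only [ctraj_succ']
  rfl

lemma le_Jcost_of_forall_le [Finite S] (h0 : 0 ≤ lam) (h1 : lam < 1) (hg : ∀ x a, |g x a| ≤ M)
    {V : S → ℝ} (hV : ∀ x a, V x ≤ g x a + lam * V (f x a)) (x : S) (u : ℕ → A) :
    V x ≤ Jcost f g lam x u := by
  obtain ⟨B, hB⟩ := Finite.exists_le V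
  let gap : S × (ℕ → A) → ℝ := fun p => V p.1 - Jcost f g lam p.1 p.2
  have hgap_le : ∀ p, gap p ≤ B + M * (1 - lam)⁻¹ := fun p => by
    linarith [hB p.1, neg_abs_le (Jcost f g lam p.1 p.2), abs_Jcost_le f h0 h1 hg p.1 p.2]
  have hgap_step : ∀ p, ∃ p', gap p ≤ lam * gap p' := fun ⟨y, u⟩ =>
    ⟨(f y (u 0), fun t => u (t + 1)), by
      simp only [gap]
      rw [Jcost_eq_add f h0 h1 hg]
      linarith [hV y (u 0)]⟩
  exact sub_nonpos.1 (nonpos_of_forall_exists_le_mul h0 h1 hgap_le hgap_step (x, u))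

lemma vpi_eq_of_forall_eq [Finite S] (h0 : 0 ≤ lam) (h1 : lam < 1) (hg : ∀ x a, |g x a| ≤ M)
    {pol : S → A} {V : S → ℝ} (hV : ∀ x, V x = g x (pol x) + lam * V (f x (pol x)))
    (x : S) : vpi f g lam pol x = V x := by
  obtain ⟨B, hB⟩ := Finite.exists_le fun y => |vpi f g lam pol y - V y|
  have hstep : ∀ y, ∃ y', |vpi f g lam pol y - V y| ≤ lam * |vpi f g lam pol y' - V y'| :=
    fun y => ⟨f y (pol y), by
      rw [vpi_eq_add f h0 h1 hg, hV y, add_sub_add_left_eq_sub, ← mul_sub, abs_mul,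
        abs_of_nonneg h0]⟩
  exact sub_eq_zero.1 (abs_nonpos_iff.1 (nonpos_of_forall_exists_le_mul h0 h1 hB hstep x))

end BoundedCost

theorem stationary_policies_suffice_general
    {S A : Type*} [Fintype S] [Fintype A] [Nonempty A]
    (f : S → A → S) (g : S → A → ℝ) (lam : ℝ) (hlam0 : 0 < lam) (hlam1 : lam < 1)
    (x : S) :
    (⨅ pol : S → A, vpi f g lam pol x) = (⨅ u : ℕ → A, Jcost f g lam x u) ∧
    ∃ u : ℕ → A, Jcost f g lam x u = ⨅ u' : ℕ → A, Jcost f g lam x u' := by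
  obtain ⟨M, hM⟩ := Finite.exists_le fun p : S × A => |g p.1 p.2|
  have hg : ∀ y a, |g y a| ≤ M := fun y a => hM (y, a)
  obtain ⟨V, hV⟩ : ∃ V, bellman f g lam V = V :=
    ⟨_, (bellman_contractingWith f g hlam0.le hlam1).fixedPoint_isFixedPt⟩
  choose pol hpol using exists_bellman_eq f g lam V
  have hlow : ∀ u, V x ≤ Jcost f g lam x u :=
    le_Jcost_of_forall_le f hlam0.le hlam1 hg
      (fun y a => congrFun hV y ▸ bellman_le f g lam V y a) x
  have hopt : vpi f g lam pol x = V x :=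
    vpi_eq_of_forall_eq f hlam0.le hlam1 hg (fun y => by rw [← hpol, hV]) x
  have hJopt : Jcost f g lam x (fun t => pol (ctraj f pol x t)) = V x :=
    (vpi_eq_Jcost f g lam pol x).symm.trans hopt
  have hJ : ⨅ u, Jcost f g lam x u = V x :=
    ciInf_eq_of_forall_ge_of_forall_gt_exists_lt hlow fun w hw => ⟨_, hJopt ▸ hw⟩
  have hP : ⨅ pol, vpi f g lam pol x = V x :=
    ciInf_eq_of_forall_ge_of_forall_gt_exists_lt (fun q => vpi_eq_Jcost f g lam q x ▸ hlow _)
      fun w hw => ⟨pol, hopt ▸ hw⟩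
  exact ⟨hP.trans hJ.symm, _, hJopt.trans hJ.symm⟩

theorem stationary_policies_suffice
    {S A : Type*} [Fintype S] [Nonempty S] [Fintype A] [Nonempty A]
    (f : S → A → S) (g : S → A → ℝ) (lam : ℝ) (hlam0 : 0 < lam) (hlam1 : lam < 1)
    (x : S) :
    (⨅ pol : S → A, vpi f g lam pol x) = (⨅ u : ℕ → A, Jcost f g lam x u) ∧
    ∃ u : ℕ → A, Jcost f g lam x u = ⨅ u' : ℕ → A, Jcost f g lam x u' :=
  stationary_policies_suffice_general f g lam hlam0 hlam1 x
end

section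
/- For a finite deterministic Markov decision process with n = |S| states, from every initial state x₀ ∈ S there exists an optimal action sequence whose trajectory is eventually periodic with small pre-period and period: there exist an action sequence u : ℕ → A attaining the infimum of J(x₀, ·), and natural numbers k and ℓ with ℓ ≥ 1 and k + ℓ ≤ n, such that the trajectory satisfies x(t + ℓ) = x(t) and u(t + ℓ) = u(t) for all t ≥ k. -/
/-!
Let `V x` be the optimal value from `x` and let `μ` be a policy that picks, in every state, an
action minimising `g x a + λ V (f x a)`. Splitting off the first stage shows that `V` satisfies
`g x (μ x) + λ V (f x (μ x)) ≤ V x`, so the gap `D x` between the cost of following `μ` from `x`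
and `V x` obeys `D x ≤ λ D (f x (μ x))`; at a state where `D` is maximal this forces `D ≤ 0`,
i.e. following `μ` is optimal. The resulting trajectory iterates the map `x ↦ f x (μ x)` on a set
of `n` states, so by pigeonhole it enters a cycle within its first `n + 1` entries.
-/

open Function

theorem Function.iterate_add_sub_eq_of_iterate_eq {α : Type*} {F : α → α} {x : α} {i j : ℕ}
    (hij : i ≤ j) (hF : F^[i] x = F^[j] x) {t : ℕ} (ht : i ≤ t) :
    F^[t + (j - i)] x = F^[t] x := by
  have hper : IsPeriodicPt F (j - i) (F^[i] x) := by
    rw [IsPeriodicPt, IsFixedPt, ← iterate_add_apply, Nat.sub_add_cancel hij, hF]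
  obtain ⟨s, rfl⟩ := Nat.exists_eq_add_of_le ht
  rw [add_comm, iterate_add_apply, add_comm, iterate_add_apply, (hper.apply_iterate s).eq]

theorem Function.exists_iterate_add_eq_of_fintype {α : Type*} [Fintype α] (F : α → α) (x : α) :
    ∃ k ℓ : ℕ, 1 ≤ ℓ ∧ k + ℓ ≤ Fintype.card α ∧ ∀ t, k ≤ t → F^[t + ℓ] x = F^[t] x := by
  obtain ⟨i, j, hne, hF⟩ := Fintype.exists_ne_map_eq_of_card_lt
    (fun m : Fin (Fintype.card α + 1) => F^[m] x) (by simp)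
  rcases Nat.lt_or_gt_of_ne (Fin.val_ne_of_ne hne) with h | h
  · exact ⟨i, j - i, by omega, by omega, fun t => iterate_add_sub_eq_of_iterate_eq h.le hF⟩
  · exact ⟨j, i - j, by omega, by omega, fun t => iterate_add_sub_eq_of_iterate_eq h.le hF.symm⟩

section DiscountedCost

variable {S A : Type*} (f : S → A → S) (g : S → A → ℝ) (lam : ℝ)

theorem traj_succ_eq_traj_tail (x0 : S) (u : ℕ → A) (t : ℕ) :
    traj f x0 u (t + 1) = traj f (f x0 (u 0)) (fun n => u (n + 1)) t := by
  induction t with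
  | zero => rfl
  | succ t ih => exact congrArg (f · (u (t + 1))) ih

variable {g lam} {M : ℝ} (hM : ∀ s a, |g s a| ≤ M) (h0 : 0 ≤ lam) (h1 : lam < 1)
include hM h0 h1

theorem summable_discounted_cost (x0 : S) (u : ℕ → A) :
    Summable fun t => lam ^ t * g (traj f x0 u t) (u t) := by
  refine Summable.of_norm_bounded ((summable_geometric_of_lt_one h0 h1).mul_left M) fun t => ?_
  rw [norm_mul, norm_pow, Real.norm_of_nonneg h0, Real.norm_eq_abs, mul_comm]
  exact mul_le_mul_of_nonneg_right (hM _ _) (pow_nonneg h0 t)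

theorem Jcost_bddBelow (x0 : S) : BddBelow (Set.range (Jcost f g lam x0)) := by
  refine ⟨-M * (1 - lam)⁻¹, ?_⟩
  rintro _ ⟨u, rfl⟩
  calc -M * (1 - lam)⁻¹ = ∑' t : ℕ, -M * lam ^ t := by
        rw [tsum_mul_left, tsum_geometric_of_lt_one h0 h1]
    _ ≤ Jcost f g lam x0 u := by
        refine Summable.tsum_le_tsum (fun t => ?_)
          ((summable_geometric_of_lt_one h0 h1).mul_left _) (summable_discounted_cost f hM h0 h1 x0 u)
        have := (abs_le.1 (hM (traj f x0 u t) (u t))).1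
        nlinarith [pow_nonneg h0 t]

theorem Jcost_eq_add_mul_Jcost_tail (x0 : S) (u : ℕ → A) :
    Jcost f g lam x0 u = g x0 (u 0) + lam * Jcost f g lam (f x0 (u 0)) (fun n => u (n + 1)) := by
  rw [Jcost, (summable_discounted_cost f hM h0 h1 x0 u).tsum_eq_zero_add, Jcost, ← tsum_mul_left,
    pow_zero, one_mul]
  congr 1
  refine tsum_congr fun t => ?_
  rw [traj_succ_eq_traj_tail, pow_succ]
  ring

end DiscountedCost

section OptimalValue

variable {S A : Type*} (f : S → A → S) (g : S → A → ℝ) (lam : ℝ)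

noncomputable def optimalValue (x : S) : ℝ :=
  ⨅ u : ℕ → A, Jcost f g lam x u

def feedbackMap (μ : S → A) (x : S) : S :=
  f x (μ x)

def feedbackSeq (μ : S → A) (x : S) (t : ℕ) : A :=
  μ ((feedbackMap f μ)^[t] x)

variable {g lam}

theorem traj_feedbackSeq (μ : S → A) (x : S) (t : ℕ) :
    traj f x (feedbackSeq f μ x) t = (feedbackMap f μ)^[t] x := by
  induction t with
  | zero => rfl
  | succ t ih => simp only [traj, feedbackSeq, feedbackMap, ih, iterate_succ_apply']

theorem feedbackSeq_tail (μ : S → A) (x : S) :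
    (fun n => feedbackSeq f μ x (n + 1)) = feedbackSeq f μ (feedbackMap f μ x) := by
  funext n
  simp only [feedbackSeq, iterate_succ_apply]

variable {M : ℝ} (hM : ∀ s a, |g s a| ≤ M) (h0 : 0 ≤ lam) (h1 : lam < 1)
include hM h0 h1

theorem optimalValue_le_Jcost (x : S) (u : ℕ → A) :
    optimalValue f g lam x ≤ Jcost f g lam x u :=
  ciInf_le (Jcost_bddBelow f hM h0 h1 x) u

theorem add_mul_optimalValue_le_of_forall_le [Nonempty A] {x : S} {a : A}
    (ha : ∀ b, g x a + lam * optimalValue f g lam (f x a)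
      ≤ g x b + lam * optimalValue f g lam (f x b)) :
    g x a + lam * optimalValue f g lam (f x a) ≤ optimalValue f g lam x := by
  refine le_ciInf fun u => ?_
  rw [Jcost_eq_add_mul_Jcost_tail f hM h0 h1]
  have := optimalValue_le_Jcost f hM h0 h1 (f x (u 0)) fun n => u (n + 1)
  linarith [ha (u 0), mul_le_mul_of_nonneg_left this h0]

theorem Jcost_feedbackSeq_le_of_greedy [Finite S] [Nonempty A] {μ : S → A}
    (hμ : ∀ x b, g x (μ x) + lam * optimalValue f g lam (f x (μ x))
      ≤ g x b + lam * optimalValue f g lam (f x b))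
    (x : S) (u : ℕ → A) :
    Jcost f g lam x (feedbackSeq f μ x) ≤ Jcost f g lam x u := by
  set D : S → ℝ := fun y => Jcost f g lam y (feedbackSeq f μ y) - optimalValue f g lam y
  have hD_le : ∀ y, D y ≤ lam * D (feedbackMap f μ y) := by
    intro y
    have hJ : Jcost f g lam y (feedbackSeq f μ y) = g y (μ y)
        + lam * Jcost f g lam (feedbackMap f μ y) (feedbackSeq f μ (feedbackMap f μ y)) := by
      rw [Jcost_eq_add_mul_Jcost_tail f hM h0 h1, feedbackSeq_tail]
      rfl
    have hV := add_mul_optimalValue_le_of_forall_le f hM h0 h1 (hμ y)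
    simp only [D, feedbackMap] at hJ hV ⊢
    linarith
  have : Nonempty S := ⟨x⟩
  obtain ⟨y, hy⟩ := Finite.exists_max D
  have hDy : D y ≤ 0 := by
    have hle : D y ≤ lam * D y := (hD_le y).trans (mul_le_mul_of_nonneg_left (hy _) h0)
    exact le_of_not_gt fun hpos => (mul_lt_of_lt_one_left hpos h1).not_ge hle
  have hDx : D x ≤ 0 := (hy x).trans hDy
  simp only [D] at hDx
  linarith [optimalValue_le_Jcost f hM h0 h1 x u]

end OptimalValue

theorem exists_eventually_periodic_optimal_sequence_general
    {S A : Type*} [Fintype S] [Fintype A] [Nonempty A]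
    (f : S → A → S) (g : S → A → ℝ) (lam : ℝ) (hlam0 : 0 < lam) (hlam1 : lam < 1)
    (x0 : S) :
    ∃ u : ℕ → A,
      (∀ u' : ℕ → A, Jcost f g lam x0 u ≤ Jcost f g lam x0 u') ∧
      ∃ k ℓ : ℕ, 1 ≤ ℓ ∧ k + ℓ ≤ Fintype.card S ∧
        ∀ t : ℕ, k ≤ t →
          traj f x0 u (t + ℓ) = traj f x0 u t ∧ u (t + ℓ) = u t := by
  obtain ⟨M, hM⟩ := Finite.exists_le fun p : S × A => |g p.1 p.2|
  choose μ hμ using fun x => Finite.exists_min fun a => g x a + lam * optimalValue f g lam (f x a)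
  obtain ⟨k, ℓ, hℓ, hkℓ, hper⟩ := (feedbackMap f μ).exists_iterate_add_eq_of_fintype x0
  refine ⟨feedbackSeq f μ x0,
    Jcost_feedbackSeq_le_of_greedy f (fun s a => hM (s, a)) hlam0.le hlam1 hμ x0,
    k, ℓ, hℓ, hkℓ, fun t ht => ?_⟩
  simp only [traj_feedbackSeq, feedbackSeq, hper t ht, and_self]

theorem exists_eventually_periodic_optimal_sequence
    {S A : Type*} [Fintype S] [Nonempty S] [Fintype A] [Nonempty A]
    (f : S → A → S) (g : S → A → ℝ) (lam : ℝ) (hlam0 : 0 < lam) (hlam1 : lam < 1)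
    (x0 : S) :
    ∃ u : ℕ → A,
      (∀ u' : ℕ → A, Jcost f g lam x0 u ≤ Jcost f g lam x0 u') ∧
      ∃ k ℓ : ℕ, 1 ≤ ℓ ∧ k + ℓ ≤ Fintype.card S ∧
        ∀ t : ℕ, k ≤ t →
          traj f x0 u (t + ℓ) = traj f x0 u t ∧ u (t + ℓ) = u t :=
  exists_eventually_periodic_optimal_sequence_general f g lam hlam0 hlam1 x0
end
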